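/- Let 𝒳 = 𝒴 with |𝒳| = n ≥ 2, Q(x) = 1/n, and let Ŵ be the modulo-additive estimated channel Ŵ(y|x) = p̄ if y = x and Ŵ(y|x) = p if y ≠ x, where 0 < p < 1/n and p̄ = 1 − (n−1)p (so p̄ > p). Then for every s ≥ 0: (i) I^ML_{s,0} = log( n / ( p̄^s + (1−p̄) p^{s−1} ) ) + s ( p̄ log p̄ + (1−p̄) log p ); (ii) V_{s,0} = s² p̄ (1−p̄) (log(p̄/p))²; and (iii) for s > 0 and 0 ≤ r ≤ p̄ / (2(1−p̄)), the minimizer W̃*_{s,0}(y|x) = Ŵ(y|x)(1 − √(2r) φ_{s,0}(x,y)) of Σ_{x,y} Q(x)P(y|x) i_{s,0}(x,y) over the chi-squared ball B̃(Ŵ,r) is again a modulo-additive channel, with off-diagonal entries q = p ( 1 + √(2r) · √( p̄/(1−p̄) ) ) and diagonal entries 1 − (n−1)q, and it is a valid conditional pmf exactly when r ≤ p̄ / (2(1−p̄)). -/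

import Mathlib

open Real Filter

variable {𝓧 𝓨 : Type*} [Fintype 𝓧] [Fintype 𝓨]

/-- Mismatched information density `i_{s,a}(x,y)`. -/
noncomputable def iDen (Q : 𝓧 → ℝ) (Wh : 𝓧 → 𝓨 → ℝ) (s : ℝ) (a : 𝓧 → ℝ) (x : 𝓧) (y : 𝓨) : ℝ :=
  Real.log ((Wh x y ^ s * Real.exp (a x)) / ∑ x' : 𝓧, Q x' * Wh x' y ^ s * Real.exp (a x'))

/-- `I^ML_{s,a}`. -/
noncomputable def IML (Q : 𝓧 → ℝ) (Wh : 𝓧 → 𝓨 → ℝ) (s : ℝ) (a : 𝓧 → ℝ) : ℝ :=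
  ∑ x : 𝓧, ∑ y : 𝓨, Q x * Wh x y * iDen Q Wh s a x y

/-- `V_{s,a}`. -/
noncomputable def Vsa (Q : 𝓧 → ℝ) (Wh : 𝓧 → 𝓨 → ℝ) (s : ℝ) (a : 𝓧 → ℝ) : ℝ :=
  ∑ x : 𝓧, Q x * ((∑ y : 𝓨, Wh x y * (iDen Q Wh s a x y) ^ 2)
    - (∑ y : 𝓨, Wh x y * iDen Q Wh s a x y) ^ 2)

/-- `φ_{s,a}(x,y)`. -/
noncomputable def phiSA (Q : 𝓧 → ℝ) (Wh : 𝓧 → 𝓨 → ℝ) (s : ℝ) (a : 𝓧 → ℝ) (x : 𝓧) (y : 𝓨) : ℝ :=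
  (iDen Q Wh s a x y - ∑ y' : 𝓨, Wh x y' * iDen Q Wh s a x y') / Real.sqrt (Vsa Q Wh s a)

/-- Worst-case channel `W̃*_{s,a}` at radius `r`. -/
noncomputable def Wstar (Q : 𝓧 → ℝ) (Wh : 𝓧 → 𝓨 → ℝ) (s : ℝ) (a : 𝓧 → ℝ) (r : ℝ) :
    𝓧 → 𝓨 → ℝ :=
  fun x y => Wh x y * (1 - Real.sqrt (2 * r) * phiSA Q Wh s a x y)

/-- Conditional pmf on `𝓨` given `𝓧`. -/
def IsCondPMF (P : 𝓧 → 𝓨 → ℝ) : Prop :=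
  (∀ x y, 0 ≤ P x y) ∧ ∀ x, ∑ y : 𝓨, P x y = 1

/-- Chi-squared ball `B̃(Ŵ, r)`. -/
def chiBall (Q : 𝓧 → ℝ) (Wh : 𝓧 → 𝓨 → ℝ) (r : ℝ) : Set (𝓧 → 𝓨 → ℝ) :=
  {P | IsCondPMF P ∧
    (1 / 2) * ∑ x : 𝓧, ∑ y : 𝓨, Q x * (P x y - Wh x y) ^ 2 / Wh x y ≤ r}

/-! The worst case over the chi-squared ball is Cauchy–Schwarz. If the rows of `P` sum to one,
`∑ Q (Ŵ - P) i = ∑ Q (Ŵ - P) (i - m)` with `m x` the `Ŵ x`-mean of `i`, and Cauchy–Schwarz with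
weights `Q / Ŵ` and `Q Ŵ` bounds this by `√(2 r) √V`; the tilted channel `W̃*` attains the bound,
for any `Q` and `Ŵ`.

For the uniform input and the modulo-additive channel the column sums `∑ Q(x') Ŵ(y|x')^s` do not
depend on `y`, so `i_{s,0}` takes one value on the diagonal and one off it. Every quantity is then
a two-point computation, and `W̃*` is again a two-level matrix. -/

def rowMean {α β : Type*} [Fintype β] (W f : α → β → ℝ) (x : α) : ℝ := ∑ y, W x y * f x y

section RowMean

variable {α β : Type*} [Fintype β] {W : α → β → ℝ}

theorem sum_mul_sub_rowMean (hW : ∀ x, ∑ y, W x y = 1) (f : α → β → ℝ) (x : α) :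
    ∑ y, W x y * (f x y - rowMean W f x) = 0 := by
  simp only [mul_sub, Finset.sum_sub_distrib, ← Finset.sum_mul, hW, one_mul, rowMean, sub_self]

theorem sum_mul_sub_rowMean_sq (hW : ∀ x, ∑ y, W x y = 1) (f : α → β → ℝ) (x : α) :
    ∑ y, W x y * (f x y - rowMean W f x) ^ 2 = ∑ y, W x y * f x y ^ 2 - rowMean W f x ^ 2 := by
  have hsplit : ∀ y, W x y * (f x y - rowMean W f x) ^ 2
      = W x y * f x y ^ 2 - 2 * rowMean W f x * (W x y * f x y) + rowMean W f x ^ 2 * W x y :=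
    fun y => by ring
  simp only [hsplit, Finset.sum_add_distrib, Finset.sum_sub_distrib, ← Finset.mul_sum, hW]
  rw [← rowMean]
  ring

theorem sum_mul_sub_rowMean_mul_self (hW : ∀ x, ∑ y, W x y = 1) (f : α → β → ℝ) (x : α) :
    ∑ y, W x y * (f x y - rowMean W f x) * f x y
      = ∑ y, W x y * (f x y - rowMean W f x) ^ 2 := by
  have hsplit : ∀ y, W x y * (f x y - rowMean W f x) * f x y
      = W x y * (f x y - rowMean W f x) ^ 2 + rowMean W f x * (W x y * (f x y - rowMean W f x)) :=
    fun y => by ring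
  simp only [hsplit, Finset.sum_add_distrib, ← Finset.mul_sum, sum_mul_sub_rowMean hW, mul_zero,
    add_zero]

theorem sum_sub_sum_le_sqrt_chiSq_mul_sqrt_var [Fintype α] {Q : α → ℝ} (hQ : ∀ x, 0 ≤ Q x)
    (hWpos : ∀ x y, 0 < W x y) (hW : ∀ x, ∑ y, W x y = 1) {P : α → β → ℝ}
    (hP : ∀ x, ∑ y, P x y = 1) (f : α → β → ℝ) :
    ∑ x, ∑ y, Q x * W x y * f x y - ∑ x, ∑ y, Q x * P x y * f x y
      ≤ √(∑ x, ∑ y, Q x * (P x y - W x y) ^ 2 / W x y)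
        * √(∑ x, Q x * ∑ y, W x y * (f x y - rowMean W f x) ^ 2) := by
  set m := rowMean W f
  have hcentre : ∀ x, ∑ y, (W x y - P x y) * m x = 0 := fun x => by
    rw [← Finset.sum_mul, Finset.sum_sub_distrib, hW, hP, sub_self, zero_mul]
  have hdiff : ∑ x, ∑ y, Q x * W x y * f x y - ∑ x, ∑ y, Q x * P x y * f x y
      = ∑ xy : α × β, Q xy.1 * (W xy.1 xy.2 - P xy.1 xy.2) * (f xy.1 xy.2 - m xy.1) := by
    rw [Fintype.sum_prod_type, ← Finset.sum_sub_distrib]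
    refine Finset.sum_congr rfl fun x _ => ?_
    have := congrArg (Q x * ·) (hcentre x)
    simp only [Finset.mul_sum, mul_zero] at this
    rw [← Finset.sum_sub_distrib, ← sub_zero (∑ y, _), ← this, ← Finset.sum_sub_distrib]
    exact Finset.sum_congr rfl fun y _ => by ring
  have hvar : ∑ x, Q x * ∑ y, W x y * (f x y - m x) ^ 2
      = ∑ xy : α × β, Q xy.1 * W xy.1 xy.2 * (f xy.1 xy.2 - m xy.1) ^ 2 := by
    simp only [Fintype.sum_prod_type, Finset.mul_sum, mul_assoc]
  have hchi : ∑ x, ∑ y, Q x * (P x y - W x y) ^ 2 / W x y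
      = ∑ xy : α × β, Q xy.1 * (P xy.1 xy.2 - W xy.1 xy.2) ^ 2 / W xy.1 xy.2 :=
    (Fintype.sum_prod_type' (fun x y => Q x * (P x y - W x y) ^ 2 / W x y)).symm
  have hchi0 : ∀ xy : α × β, 0 ≤ Q xy.1 * (P xy.1 xy.2 - W xy.1 xy.2) ^ 2 / W xy.1 xy.2 :=
    fun xy => div_nonneg (mul_nonneg (hQ _) (sq_nonneg _)) (hWpos _ _).le
  rw [hdiff, hvar, hchi, ← Real.sqrt_mul (Finset.sum_nonneg fun xy _ => hchi0 xy)]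
  refine Real.le_sqrt_of_sq_le (Finset.sum_sq_le_sum_mul_sum_of_sq_le_mul _
    (fun xy _ => hchi0 xy) (fun xy _ => ?_) (fun xy _ => le_of_eq ?_))
  · exact mul_nonneg (mul_nonneg (hQ _) (hWpos _ _).le) (sq_nonneg _)
  · field_simp [(hWpos xy.1 xy.2).ne']
    ring

end RowMean

section WorstCase

variable {Q : 𝓧 → ℝ} {Wh : 𝓧 → 𝓨 → ℝ} {s : ℝ} {a : 𝓧 → ℝ}

theorem Vsa_eq_sum_mul_sq_sub_rowMean (hW : ∀ x, ∑ y, Wh x y = 1) :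
    Vsa Q Wh s a
      = ∑ x, Q x * ∑ y, Wh x y * (iDen Q Wh s a x y - rowMean Wh (iDen Q Wh s a) x) ^ 2 := by
  simp only [sum_mul_sub_rowMean_sq hW]
  rfl

theorem Wstar_eq_sub (r : ℝ) (x : 𝓧) (y : 𝓨) :
    Wstar Q Wh s a r x y = Wh x y - √(2 * r) / √(Vsa Q Wh s a)
      * (Wh x y * (iDen Q Wh s a x y - rowMean Wh (iDen Q Wh s a) x)) := by
  simp only [Wstar, phiSA, rowMean]
  ring

theorem sum_sum_mul_Wstar_mul_iDen (hW : ∀ x, ∑ y, Wh x y = 1) (r : ℝ) :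
    ∑ x, ∑ y, Q x * Wstar Q Wh s a r x y * iDen Q Wh s a x y
      = IML Q Wh s a - √(2 * r) * √(Vsa Q Wh s a) := by
  have hrow : ∀ x, ∑ y, Q x * Wstar Q Wh s a r x y * iDen Q Wh s a x y
      = ∑ y, Q x * Wh x y * iDen Q Wh s a x y - √(2 * r) / √(Vsa Q Wh s a)
        * (Q x * ∑ y, Wh x y * (iDen Q Wh s a x y - rowMean Wh (iDen Q Wh s a) x)
          * iDen Q Wh s a x y) := by
    intro x
    simp only [Wstar_eq_sub, Finset.mul_sum, ← Finset.sum_sub_distrib]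
    exact Finset.sum_congr rfl fun y _ => by ring
  simp only [hrow, Finset.sum_sub_distrib, ← Finset.mul_sum, sum_mul_sub_rowMean_mul_self hW,
    mul_comm_div, ← Finset.sum_div]
  rw [← Vsa_eq_sum_mul_sq_sub_rowMean hW, Real.div_sqrt, IML]

theorem chiSq_Wstar (hWpos : ∀ x y, 0 < Wh x y) (hW : ∀ x, ∑ y, Wh x y = 1) {r : ℝ} (hr : 0 ≤ r)
    (hV : 0 < Vsa Q Wh s a) :
    (1 / 2) * ∑ x, ∑ y, Q x * (Wstar Q Wh s a r x y - Wh x y) ^ 2 / Wh x y = r := by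
  have hterm : ∀ x y, Q x * (Wstar Q Wh s a r x y - Wh x y) ^ 2 / Wh x y
      = 2 * r / Vsa Q Wh s a
        * (Q x * (Wh x y * (iDen Q Wh s a x y - rowMean Wh (iDen Q Wh s a) x) ^ 2)) := by
    intro x y
    rw [Wstar_eq_sub, sub_sub_cancel_left, neg_sq, mul_pow, div_pow, Real.sq_sqrt (by positivity),
      Real.sq_sqrt hV.le]
    field_simp [(hWpos x y).ne']
  simp only [hterm, ← Finset.mul_sum, ← Vsa_eq_sum_mul_sq_sub_rowMean hW]
  field_simp

theorem IML_sub_le_of_mem_chiBall (hQ : ∀ x, 0 ≤ Q x) (hWpos : ∀ x y, 0 < Wh x y)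
    (hW : ∀ x, ∑ y, Wh x y = 1) {r : ℝ} {P : 𝓧 → 𝓨 → ℝ} (hP : P ∈ chiBall Q Wh r) :
    IML Q Wh s a - √(2 * r) * √(Vsa Q Wh s a) ≤ ∑ x, ∑ y, Q x * P x y * iDen Q Wh s a x y := by
  obtain ⟨⟨-, hP1⟩, hPr⟩ := hP
  have hCS := sum_sub_sum_le_sqrt_chiSq_mul_sqrt_var hQ hWpos hW hP1 (iDen Q Wh s a)
  rw [← Vsa_eq_sum_mul_sq_sub_rowMean hW] at hCS
  have hchi : √(∑ x, ∑ y, Q x * (P x y - Wh x y) ^ 2 / Wh x y) ≤ √(2 * r) :=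
    Real.sqrt_le_sqrt (by simp only [mul_div_assoc] at hPr ⊢; linarith)
  rw [IML]
  nlinarith [mul_le_mul_of_nonneg_right hchi (Real.sqrt_nonneg (Vsa Q Wh s a))]

end WorstCase

theorem mul_sqrt_div_comm {a b : ℝ} (ha : 0 < a) (hb : 0 < b) : a * √(b / a) = b * √(a / b) := by
  have key : ∀ {u v : ℝ}, 0 < u → u * √(v / u) = √(u * v) := fun {u v} hu => by
    rw [← Real.sqrt_sq hu.le, ← Real.sqrt_mul (sq_nonneg u), Real.sqrt_sq hu.le]
    congr 1
    field_simp
  rw [key ha, key hb, mul_comm]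

theorem sqrt_div_mul_sqrt_mul {a b : ℝ} (ha : 0 < a) (hb : 0 ≤ b) : √(b / a) * √(a * b) = b := by
  rw [← Real.sqrt_mul (by positivity), show b / a * (a * b) = b ^ 2 by field_simp, Real.sqrt_sq hb]

theorem sqrt_two_mul_mul_sqrt_le_one_iff {u r : ℝ} (hu0 : 0 < u) (hu1 : u < 1) (hr : 0 ≤ r) :
    √(2 * r) * √((1 - u) / u) ≤ 1 ↔ r ≤ u / (2 * (1 - u)) := by
  rw [← Real.sqrt_mul (by positivity), Real.sqrt_le_one, le_div_iff₀ (by linarith), ← mul_div_assoc,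
    div_le_one hu0]
  constructor <;> intro h <;> linarith

theorem lt_one_sub_sub_one_mul {n p : ℝ} (hn : 2 ≤ n) (hp : 0 < p) (hpn : p < 1 / n) :
    p < 1 - (n - 1) * p ∧ 1 - (n - 1) * p < 1 := by
  have := (lt_div_iff₀ (by positivity)).mp hpn
  constructor <;> nlinarith

theorem one_sub_sub_one_mul_eq_mul_one_sub {n p pbar : ℝ} (hpbar0 : 0 < pbar) (hpbar1 : pbar < 1)
    (hpbar : pbar = 1 - (n - 1) * p) (t : ℝ) :
    1 - (n - 1) * (p * (1 + t * √(pbar / (1 - pbar))))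
      = pbar * (1 - t * √((1 - pbar) / pbar)) := by
  have h1 : (n - 1) * p = 1 - pbar := by rw [hpbar]; ring
  have := mul_sqrt_div_comm hpbar0 (sub_pos.mpr hpbar1)
  linear_combination t * this + (-1 - t * √(pbar / (1 - pbar))) * h1

def twoLevel {α : Type*} [DecidableEq α] (a b : ℝ) (x y : α) : ℝ := if y = x then a else b

noncomputable def uniformWeight (α : Type*) [Fintype α] (_ : α) : ℝ := (Fintype.card α : ℝ)⁻¹

theorem sum_uniformWeight_mul {α : Type*} [Fintype α] [Nonempty α] (c : ℝ) :
    ∑ x, uniformWeight α x * c = c := by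
  simp only [← Finset.sum_mul, uniformWeight, Finset.sum_const, Finset.card_univ, nsmul_eq_mul]
  rw [mul_inv_cancel₀ (by positivity), one_mul]

section TwoLevel

variable {α : Type*} [DecidableEq α]

theorem twoLevel_comm (a b : ℝ) (x y : α) : twoLevel a b x y = twoLevel a b y x := by
  simp only [twoLevel, eq_comm]

theorem apply_twoLevel (g : ℝ → ℝ) (a b : ℝ) (x y : α) :
    g (twoLevel a b x y) = twoLevel (g a) (g b) x y :=
  apply_ite g _ _ _

theorem twoLevel_pos {a b : ℝ} (ha : 0 < a) (hb : 0 < b) (x y : α) : 0 < twoLevel a b x y := by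
  unfold twoLevel; split_ifs <;> assumption

theorem twoLevel_mul_twoLevel (a b c d : ℝ) (x y : α) :
    twoLevel a b x y * twoLevel c d x y = twoLevel (a * c) (b * d) x y := by
  unfold twoLevel; split_ifs <;> rfl

variable [Fintype α]

theorem sum_twoLevel (a b : ℝ) (x : α) :
    ∑ y, twoLevel a b x y = a + ((Fintype.card α : ℝ) - 1) * b := by
  have hsplit : ∀ y, twoLevel a b x y = b + if y = x then a - b else 0 := fun y => by
    unfold twoLevel; split_ifs <;> ring
  simp only [hsplit, Finset.sum_add_distrib, Finset.sum_ite_eq', Finset.mem_univ, if_true,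
    Finset.sum_const, Finset.card_univ, nsmul_eq_mul]
  ring

theorem isCondPMF_twoLevel_iff [Nonempty α] {a b : ℝ} (hb : 0 ≤ b)
    (hab : a + ((Fintype.card α : ℝ) - 1) * b = 1) :
    IsCondPMF (twoLevel a b : α → α → ℝ) ↔ 0 ≤ a := by
  refine ⟨fun h => ?_, fun ha => ⟨fun x y => ?_, fun x => by rw [sum_twoLevel, hab]⟩⟩
  · obtain ⟨x⟩ := ‹Nonempty α›
    simpa [twoLevel] using h.1 x x
  · unfold twoLevel; split_ifs <;> assumption

theorem sum_twoLevel_mul_twoLevel {p pbar : ℝ}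
    (hpbar : pbar = 1 - ((Fintype.card α : ℝ) - 1) * p) (A B : ℝ) (x : α) :
    ∑ y, twoLevel pbar p x y * twoLevel A B x y = pbar * A + (1 - pbar) * B := by
  simp only [twoLevel_mul_twoLevel, sum_twoLevel, hpbar]
  ring

end TwoLevel

section SymmetricChannel

variable [DecidableEq 𝓧] [Nonempty 𝓧] {p pbar : ℝ}

theorem iDen_uniformWeight_twoLevel (hp : 0 < p) (hpbar0 : 0 < pbar)
    (hpbar : pbar = 1 - ((Fintype.card 𝓧 : ℝ) - 1) * p) (s : ℝ) :
    iDen (uniformWeight 𝓧) (twoLevel pbar p) s (fun _ => 0)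
      = twoLevel (log (Fintype.card 𝓧 / (pbar ^ s + (1 - pbar) * p ^ (s - 1))) + s * log pbar)
          (log (Fintype.card 𝓧 / (pbar ^ s + (1 - pbar) * p ^ (s - 1))) + s * log p) := by
  set D := pbar ^ s + (1 - pbar) * p ^ (s - 1)
  have hn : (1 : ℝ) ≤ Fintype.card 𝓧 := Nat.one_le_cast.mpr Fintype.card_pos
  have h1 : 1 - pbar = ((Fintype.card 𝓧 : ℝ) - 1) * p := by rw [hpbar]; ring
  have hD : 0 < D := by
    have : 0 ≤ 1 - pbar := by rw [h1]; nlinarith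
    positivity
  have hcol : ∀ y : 𝓧, ∑ x', uniformWeight 𝓧 x' * twoLevel pbar p x' y ^ s * exp 0
      = (Fintype.card 𝓧 : ℝ)⁻¹ * D := by
    intro y
    simp only [exp_zero, mul_one, twoLevel_comm _ _ _ y, apply_twoLevel (· ^ s), uniformWeight,
      ← Finset.mul_sum, sum_twoLevel]
    rw [show D = pbar ^ s + (1 - pbar) * p ^ (s - 1) from rfl, Real.rpow_sub_one hp.ne', h1]
    field_simp
  have hlog : ∀ w : ℝ, 0 < w →
      log (w ^ s * exp 0 / ((Fintype.card 𝓧 : ℝ)⁻¹ * D)) = log (Fintype.card 𝓧 / D) + s * log w := by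
    intro w hw
    rw [exp_zero, mul_one, div_mul_eq_div_div_swap, div_inv_eq_mul, mul_comm_div,
      log_mul (by positivity) (by positivity), log_rpow hw, add_comm]
  funext x y
  rw [iDen, hcol]
  unfold twoLevel
  split_ifs
  exacts [hlog pbar hpbar0, hlog p hp]

theorem IML_uniformWeight_twoLevel (hp : 0 < p) (hpbar0 : 0 < pbar)
    (hpbar : pbar = 1 - ((Fintype.card 𝓧 : ℝ) - 1) * p) (s : ℝ) :
    IML (uniformWeight 𝓧) (twoLevel pbar p) s (fun _ => 0)
      = log (Fintype.card 𝓧 / (pbar ^ s + (1 - pbar) * p ^ (s - 1)))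
        + s * (pbar * log pbar + (1 - pbar) * log p) := by
  simp only [IML, iDen_uniformWeight_twoLevel hp hpbar0 hpbar, mul_assoc, ← Finset.mul_sum,
    sum_twoLevel_mul_twoLevel hpbar, sum_uniformWeight_mul]
  ring

theorem Vsa_uniformWeight_twoLevel (hp : 0 < p) (hpbar0 : 0 < pbar)
    (hpbar : pbar = 1 - ((Fintype.card 𝓧 : ℝ) - 1) * p) (s : ℝ) :
    Vsa (uniformWeight 𝓧) (twoLevel pbar p) s (fun _ => 0)
      = s ^ 2 * pbar * (1 - pbar) * log (pbar / p) ^ 2 := by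
  simp only [Vsa, iDen_uniformWeight_twoLevel hp hpbar0 hpbar, apply_twoLevel (· ^ 2),
    sum_twoLevel_mul_twoLevel hpbar, sum_uniformWeight_mul, log_div hpbar0.ne' hp.ne']
  ring

theorem phiSA_uniformWeight_twoLevel (hp : 0 < p) (hpp : p < pbar) (hpbar1 : pbar < 1)
    (hpbar : pbar = 1 - ((Fintype.card 𝓧 : ℝ) - 1) * p) {s : ℝ} (hs : 0 < s) :
    phiSA (uniformWeight 𝓧) (twoLevel pbar p) s (fun _ => 0)
      = twoLevel √((1 - pbar) / pbar) (-√(pbar / (1 - pbar))) := by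
  have hpbar0 := hp.trans hpp
  have h1pbar : 0 < 1 - pbar := sub_pos.mpr hpbar1
  have hk : 0 < s * log (pbar / p) := mul_pos hs (log_pos ((one_lt_div hp).mpr hpp))
  have hgap : s * log pbar - s * log p = s * log (pbar / p) := by
    rw [log_div hpbar0.ne' hp.ne']; ring
  have hsqrtV : √(Vsa (uniformWeight 𝓧) (twoLevel pbar p) s (fun _ => 0))
      = s * log (pbar / p) * √(pbar * (1 - pbar)) := by
    rw [Vsa_uniformWeight_twoLevel hp hpbar0 hpbar,
      show s ^ 2 * pbar * (1 - pbar) * log (pbar / p) ^ 2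
        = (s * log (pbar / p)) ^ 2 * (pbar * (1 - pbar)) by ring, Real.sqrt_mul (sq_nonneg _),
      Real.sqrt_sq hk.le]
  funext x y
  rw [phiSA, hsqrtV, iDen_uniformWeight_twoLevel hp hpbar0 hpbar, sum_twoLevel_mul_twoLevel hpbar,
    div_eq_iff (by positivity)]
  unfold twoLevel
  split_ifs
  · have h := sqrt_div_mul_sqrt_mul hpbar0 h1pbar.le
    linear_combination (1 - pbar) * hgap - s * log (pbar / p) * h
  · have h := sqrt_div_mul_sqrt_mul h1pbar hpbar0.le
    rw [mul_comm (1 - pbar)] at h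
    linear_combination (-pbar) * hgap + s * log (pbar / p) * h

theorem Wstar_uniformWeight_twoLevel (hp : 0 < p) (hpp : p < pbar) (hpbar1 : pbar < 1)
    (hpbar : pbar = 1 - ((Fintype.card 𝓧 : ℝ) - 1) * p) {s : ℝ} (hs : 0 < s) (r : ℝ) :
    Wstar (uniformWeight 𝓧) (twoLevel pbar p) s (fun _ => 0) r
      = twoLevel (1 - ((Fintype.card 𝓧 : ℝ) - 1) * (p * (1 + √(2 * r) * √(pbar / (1 - pbar)))))
          (p * (1 + √(2 * r) * √(pbar / (1 - pbar)))) := by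
  funext x y
  rw [Wstar, phiSA_uniformWeight_twoLevel hp hpp hpbar1 hpbar hs,
    one_sub_sub_one_mul_eq_mul_one_sub (hp.trans hpp) hpbar1 hpbar]
  unfold twoLevel
  split_ifs <;> ring

end SymmetricChannel

/-- Modulo-additive estimated channel: closed forms of `I^ML_{s,0}` and `V_{s,0}`, and
the worst-case channel in the chi-squared ball is again modulo-additive. -/
theorem stmt12 {𝓧 : Type*} [Fintype 𝓧] [DecidableEq 𝓧] [Nonempty 𝓧]
    (n : ℕ) (hn : Fintype.card 𝓧 = n) (h2 : 2 ≤ n)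
    (p : ℝ) (hp : 0 < p) (hpn : p < 1 / (n : ℝ))
    (pbar : ℝ) (hpbar : pbar = 1 - ((n : ℝ) - 1) * p)
    (Q : 𝓧 → ℝ) (hQ : ∀ x, Q x = (n : ℝ)⁻¹)
    (Wh : 𝓧 → 𝓧 → ℝ) (hWh : ∀ x y, Wh x y = if y = x then pbar else p) :
    ∀ s : ℝ, 0 ≤ s →
      (IML Q Wh s (fun _ => 0)
          = Real.log ((n : ℝ) / (pbar ^ s + (1 - pbar) * p ^ (s - 1)))
            + s * (pbar * Real.log pbar + (1 - pbar) * Real.log p)) ∧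
      (Vsa Q Wh s (fun _ => 0)
          = s ^ 2 * pbar * (1 - pbar) * (Real.log (pbar / p)) ^ 2) ∧
      (0 < s → ∀ r : ℝ, 0 ≤ r →
        (∀ x y : 𝓧, Wstar Q Wh s (fun _ => 0) r x y
            = if y = x
              then 1 - ((n : ℝ) - 1) * (p * (1 + Real.sqrt (2 * r) * Real.sqrt (pbar / (1 - pbar))))
              else p * (1 + Real.sqrt (2 * r) * Real.sqrt (pbar / (1 - pbar)))) ∧
        (IsCondPMF (Wstar Q Wh s (fun _ => 0) r) ↔ r ≤ pbar / (2 * (1 - pbar))) ∧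
        (r ≤ pbar / (2 * (1 - pbar)) →
          Wstar Q Wh s (fun _ => 0) r ∈ chiBall Q Wh r ∧
          ∀ P ∈ chiBall Q Wh r,
            (∑ x : 𝓧, ∑ y : 𝓧, Q x * Wstar Q Wh s (fun _ => 0) r x y * iDen Q Wh s (fun _ => 0) x y)
              ≤ ∑ x : 𝓧, ∑ y : 𝓧, Q x * P x y * iDen Q Wh s (fun _ => 0) x y)) := by
  intro s _
  subst hn
  obtain rfl : Q = uniformWeight 𝓧 := funext hQ
  obtain rfl : Wh = twoLevel pbar p := funext₂ hWh
  obtain ⟨hpp, hpbar1⟩ : p < pbar ∧ pbar < 1 :=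
    hpbar ▸ lt_one_sub_sub_one_mul (by exact_mod_cast h2) hp hpn
  have hpbar0 : 0 < pbar := hp.trans hpp
  have hWpos := twoLevel_pos (α := 𝓧) hpbar0 hp
  have hW : ∀ x : 𝓧, ∑ y, twoLevel pbar p x y = 1 := fun x => by rw [sum_twoLevel, hpbar]; ring
  have hVsa := Vsa_uniformWeight_twoLevel hp hpbar0 hpbar s
  refine ⟨IML_uniformWeight_twoLevel hp hpbar0 hpbar s, hVsa, fun hs' r hr => ?_⟩
  have hV : 0 < Vsa (uniformWeight 𝓧) (twoLevel pbar p) s (fun _ => 0) := by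
    rw [hVsa]
    have := log_pos ((one_lt_div hp).mpr hpp)
    have := sub_pos.mpr hpbar1
    positivity
  have hWstar := Wstar_uniformWeight_twoLevel hp hpp hpbar1 hpbar hs' r
  have hpmf : IsCondPMF (Wstar (uniformWeight 𝓧) (twoLevel pbar p) s (fun _ => 0) r)
      ↔ r ≤ pbar / (2 * (1 - pbar)) := by
    rw [hWstar, isCondPMF_twoLevel_iff (by positivity) (by ring),
      one_sub_sub_one_mul_eq_mul_one_sub hpbar0 hpbar1 hpbar, mul_nonneg_iff_of_pos_left hpbar0,
      sub_nonneg, sqrt_two_mul_mul_sqrt_le_one_iff hpbar0 hpbar1 hr]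
  refine ⟨fun x y => congrFun₂ hWstar x y, hpmf, fun hr' => ⟨⟨hpmf.mpr hr', ?_⟩, fun P hP => ?_⟩⟩
  · exact (chiSq_Wstar hWpos hW hr hV).le
  · rw [sum_sum_mul_Wstar_mul_iDen hW]
    exact IML_sub_le_of_mem_chiBall (fun _ => inv_nonneg.mpr (Nat.cast_nonneg _)) hWpos hW hP
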